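/- arXiv:1805.00214 — 7 statements merged into one kernel-verified Lean document; each statement's English description precedes it below -/
import Mathlib

section
/- Let x₁ ≤ x₂ ≤ ⋯ ≤ x₆ be real numbers. For every partition of the index set {1, …, 6} into two 3-element subsets S and T, the sum of the distances within the two triples (x₁, x₂, x₃) and (x₄, x₅, x₆) is minimal: A(x₁,x₂,x₃) + A(x₄,x₅,x₆) ≤ A(x_S) + A(x_T), where A(x_S) denotes the distance within the triple indexed by S. -/
/-!
For `a ≤ b ≤ c` the distance within `(a, b, c)` is `2 (c - a)`, so for a monotone `x` the
distance within a 3-element index set is twice the spread of its values. Say `0 ∈ S`. If also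
`5 ∈ S`, the spread of `S` alone is `x₅ - x₀ ≥ (x₂ - x₀) + (x₅ - x₃)`. Otherwise `5 ∈ T`;
a 3-element subset of `Fin 6` has largest element at least `2` and smallest at most `3`,
so the spreads of `S` and `T` are at least `x₂ - x₀` and `x₅ - x₃`.
-/

/-- The distance within the tuple of values indexed by a finite index set `S`:
the sum of `|x j - x i|` over all pairs `i < j` in `S`. -/
def distWithin {m : ℕ} (x : Fin m → ℝ) (S : Finset (Fin m)) : ℝ :=
  ∑ i ∈ S, ∑ j ∈ S.filter (fun j => i < j), |x j - x i|

theorem abs_sub_add_abs_sub_add_abs_sub_of_le {α : Type*} [CommRing α] [LinearOrder α]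
    [IsOrderedRing α] {a b c : α} (hab : a ≤ b) (hbc : b ≤ c) :
    |b - a| + |c - b| + |c - a| = 2 * (c - a) := by
  rw [abs_of_nonneg (sub_nonneg.2 hab), abs_of_nonneg (sub_nonneg.2 hbc),
    abs_of_nonneg (sub_nonneg.2 (hab.trans hbc))]
  ring

theorem Finset.exists_lt_lt_eq_of_card_eq_three {α : Type*} [LinearOrder α] {s : Finset α}
    (hs : s.card = 3) : ∃ a b c, a < b ∧ b < c ∧ s = {a, b, c} := by
  set f := s.orderEmbOfFin hs
  refine ⟨f 0, f 1, f 2, f.strictMono (by decide), f.strictMono (by decide), ?_⟩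
  conv_lhs => rw [← s.image_orderEmbOfFin_univ hs]
  simp [Fin.univ_succ, Finset.image_insert, f]

section
variable {m : ℕ}

theorem distWithin_nonneg (x : Fin m → ℝ) (S : Finset (Fin m)) : 0 ≤ distWithin x S :=
  Finset.sum_nonneg fun _ _ => Finset.sum_nonneg fun _ _ => abs_nonneg _

theorem distWithin_triple (x : Fin m → ℝ) {a b c : Fin m} (hab : a < b) (hbc : b < c) :
    distWithin x {a, b, c} = |x b - x a| + |x c - x b| + |x c - x a| := by
  have hac := hab.trans hbc
  simp only [distWithin, Finset.filter_insert, Finset.filter_singleton, Finset.mem_insert,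
    Finset.mem_singleton, hab, hbc, hac, hab.ne, hbc.ne, hac.ne, hab.not_gt, hbc.not_gt,
    hac.not_gt, or_self, not_false_eq_true, Finset.sum_insert, lt_self_iff_false, ↓reduceIte,
    Finset.sum_singleton, Finset.sum_empty, add_zero]
  ring

theorem two_mul_sub_le_distWithin {x : Fin m → ℝ} (hx : Monotone x) {S : Finset (Fin m)}
    (hS : S.card = 3) {i j : Fin m} (hi : i ∈ S) (hj : j ∈ S) :
    2 * (x j - x i) ≤ distWithin x S := by
  obtain ⟨a, b, c, hab, hbc, rfl⟩ := Finset.exists_lt_lt_eq_of_card_eq_three hS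
  rw [distWithin_triple x hab hbc,
    abs_sub_add_abs_sub_add_abs_sub_of_le (hx hab.le) (hx hbc.le)]
  have hai : x a ≤ x i := by
    simp only [Finset.mem_insert, Finset.mem_singleton] at hi
    rcases hi with rfl | rfl | rfl <;> exact hx (by order)
  have hjc : x j ≤ x c := by
    simp only [Finset.mem_insert, Finset.mem_singleton] at hj
    rcases hj with rfl | rfl | rfl <;> exact hx (by order)
  linarith
end

theorem Fin.card_le_val_max'_add_one {n : ℕ} (s : Finset (Fin n)) (hs : s.Nonempty) :
    s.card ≤ s.max' hs + 1 := by
  rw [← Fin.card_Iic]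
  exact Finset.card_le_card fun i hi => Finset.mem_Iic.2 (s.le_max' i hi)

theorem Fin.card_add_val_min'_le {n : ℕ} (s : Finset (Fin n)) (hs : s.Nonempty) :
    s.card + s.min' hs ≤ n := by
  have : s.card ≤ n - s.min' hs := by
    rw [← Fin.card_Ici]
    exact Finset.card_le_card fun i hi => Finset.mem_Ici.2 (s.min'_le i hi)
  omega

theorem sorted_six_tuple_triple_matching_min_abs_general (x : Fin 6 → ℝ)
    (hx : Monotone x) (S T : Finset (Fin 6)) (hS : S.card = 3)
    (hT : T.card = 3) (hunion : S ∪ T = Finset.univ) :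
    (|x 1 - x 0| + |x 2 - x 1| + |x 2 - x 0|) +
      (|x 4 - x 3| + |x 5 - x 4| + |x 5 - x 3|) ≤
    distWithin x S + distWithin x T := by
  rw [abs_sub_add_abs_sub_add_abs_sub_of_le (hx (by decide)) (hx (by decide)),
    abs_sub_add_abs_sub_add_abs_sub_of_le (hx (by decide)) (hx (by decide))]
  have hmem (i : Fin 6) : i ∈ S ∨ i ∈ T := Finset.mem_union.1 (hunion ▸ Finset.mem_univ i)
  wlog h0 : 0 ∈ S generalizing S T
  · have := this T S hT hS (by rw [Finset.union_comm, hunion]) (fun i => (hmem i).symm)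
      ((hmem 0).resolve_left h0)
    linarith
  have h23 : x 2 ≤ x 3 := hx (by decide)
  rcases hmem 5 with h5 | h5
  · linarith [two_mul_sub_le_distWithin hx hS h0 h5, distWithin_nonneg x T]
  · have hSne : S.Nonempty := ⟨0, h0⟩
    have hTne : T.Nonempty := ⟨5, h5⟩
    have hSmax : x 2 ≤ x (S.max' hSne) :=
      hx (by have := Fin.card_le_val_max'_add_one S hSne; omega)
    have hTmin : x (T.min' hTne) ≤ x 3 :=
      hx (by have := Fin.card_add_val_min'_le T hTne; omega)
    linarith [two_mul_sub_le_distWithin hx hS h0 (S.max'_mem hSne),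
      two_mul_sub_le_distWithin hx hT (T.min'_mem hTne) h5]

/-- For a sorted 6-tuple, the partition into the triples `(x₁,x₂,x₃)` and
`(x₄,x₅,x₆)` minimizes the total distance within, over all partitions of the
six indices into two 3-element subsets. -/
theorem sorted_six_tuple_triple_matching_min_abs (x : Fin 6 → ℝ)
    (hx : Monotone x) (S T : Finset (Fin 6)) (hS : S.card = 3)
    (hT : T.card = 3) (hdisj : Disjoint S T) (hunion : S ∪ T = Finset.univ) :
    (|x 1 - x 0| + |x 2 - x 1| + |x 2 - x 0|) +
      (|x 4 - x 3| + |x 5 - x 4| + |x 5 - x 3|) ≤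
    distWithin x S + distWithin x T :=
  sorted_six_tuple_triple_matching_min_abs_general x hx S T hS hT hunion
end

section
/- Let k ≥ 1 and suppose that for every nondecreasing 2k-tuple of real numbers (y₁ ≤ ⋯ ≤ y_{2k}) and every partition of {1, …, 2k} into two k-element subsets S and T, the consecutive split satisfies A(y₁, …, y_k) + A(y_{k+1}, …, y_{2k}) ≤ A(y_S) + A(y_T). Then for every n ≥ 1, every nondecreasing kn-tuple of real numbers (x₁ ≤ ⋯ ≤ x_{kn}), and every partition of {1, …, kn} into n pairwise disjoint k-element subsets S₁, …, S_n, the partition into n consecutive blocks is minimal: ∑_{m=1}^{n} A(x_{(m−1)k+1}, …, x_{(m−1)k+k}) ≤ ∑_{m=1}^{n} A(x_{S_m}). -/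
/-!
Induction on `n`, peeling off the last block `T`, i.e. the `k` largest indices. Fix a part
`S a`. While `T ⊄ S a`, choose a part `S b` meeting `T \ S a` and replace `S a, S b` by the
upper and lower halves of `S a ∪ S b`: the hypothesis, applied to the sorted `2k`-tuple indexed
by `S a ∪ S b`, says this does not increase the cost, and the new part at `a` contains strictly
more of `T`. Once `S a = T`, the other parts partition the first `nk` indices.
-/

open Finset

structure IsKPartition {ι α : Type*} [DecidableEq α] (k : ℕ) (I : Finset ι) (S : ι → Finset α)
    (W : Finset α) : Prop where
  card_eq : ∀ i ∈ I, (S i).card = k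
  pairwiseDisjoint : (I : Set ι).PairwiseDisjoint S
  biUnion_eq : I.biUnion S = W

namespace IsKPartition

variable {ι α : Type*} [DecidableEq ι] [DecidableEq α] {k : ℕ} {I : Finset ι}
  {S : ι → Finset α} {W : Finset α} {a b : ι}

theorem erase (hP : IsKPartition k I S W) (ha : a ∈ I) :
    IsKPartition k (I.erase a) S (W \ S a) where
  card_eq i hi := hP.card_eq i (mem_of_mem_erase hi)
  pairwiseDisjoint := hP.pairwiseDisjoint.subset (by simp)
  biUnion_eq := by
    have hdisj : Disjoint (S a) ((I.erase a).biUnion S) :=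
      (disjoint_biUnion_right _ _ _).2 fun i hi =>
        hP.pairwiseDisjoint ha (mem_of_mem_erase hi) (ne_of_mem_erase hi).symm
    rw [← hP.biUnion_eq, ← insert_erase ha, biUnion_insert, erase_insert (notMem_erase a I),
      union_sdiff_cancel_left hdisj]

theorem update_update (hP : IsKPartition k I S W) (ha : a ∈ I) (hb : b ∈ I) (hab : a ≠ b)
    {L H : Finset α} (hL : L.card = k) (hH : H.card = k) (hLH : Disjoint L H)
    (hU : L ∪ H = S a ∪ S b) :
    IsKPartition k I (Function.update (Function.update S b L) a H) W where
  card_eq i hi := by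
    simp only [Function.update_apply]
    split_ifs <;> simp_all [hP.card_eq]
  pairwiseDisjoint i hi j hj hij := by
    have hrest : ∀ j ∈ I, j ≠ a → j ≠ b → Disjoint (S a ∪ S b) (S j) := fun j hj hja hjb =>
      disjoint_union_left.2 ⟨hP.pairwiseDisjoint ha hj (Ne.symm hja),
        hP.pairwiseDisjoint hb hj (Ne.symm hjb)⟩
    have hHrest : ∀ j ∈ I, j ≠ a → j ≠ b → Disjoint H (S j) := fun j hj hja hjb =>
      (hrest j hj hja hjb).mono_left (hU ▸ subset_union_right)
    have hLrest : ∀ j ∈ I, j ≠ a → j ≠ b → Disjoint L (S j) := fun j hj hja hjb =>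
      (hrest j hj hja hjb).mono_left (hU ▸ subset_union_left)
    simp only [Function.onFun, Function.update_apply]
    split_ifs <;> subst_vars
    all_goals first
      | exact absurd rfl hij | exact hLH | exact hLH.symm | exact hP.pairwiseDisjoint hi hj hij
      | exact hHrest _ ‹_› ‹_› ‹_› | exact hLrest _ ‹_› ‹_› ‹_›
      | exact (hHrest _ ‹_› ‹_› ‹_›).symm | exact (hLrest _ ‹_› ‹_› ‹_›).symm
  biUnion_eq := by
    have hb' : b ∈ I.erase a := mem_erase.2 ⟨hab.symm, hb⟩
    have hrest : ((I.erase a).erase b).biUnion (Function.update (Function.update S b L) a H) =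
        ((I.erase a).erase b).biUnion S := by
      refine biUnion_congr rfl fun j hj => ?_
      rw [Function.update_of_ne (ne_of_mem_erase (mem_of_mem_erase hj)),
        Function.update_of_ne (ne_of_mem_erase hj)]
    rw [← hP.biUnion_eq, ← insert_erase ha, ← insert_erase hb', biUnion_insert, biUnion_insert,
      biUnion_insert, biUnion_insert, hrest, Function.update_self,
      Function.update_of_ne hab.symm, Function.update_self, ← union_assoc, ← union_assoc,
      union_comm H, hU]

end IsKPartition

theorem distWithin_image {m M : ℕ} (x : Fin M → ℝ) {e : Fin m → Fin M} (he : StrictMono e)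
    (A : Finset (Fin m)) : distWithin x (A.image e) = distWithin (x ∘ e) A := by
  unfold distWithin
  rw [sum_image fun a _ b _ h => he.injective h]
  refine sum_congr rfl fun i _ => ?_
  simp only [filter_image, he.lt_iff_lt, sum_image fun a _ b _ h => he.injective h,
    Function.comp_apply]

theorem sum_update_update_le {ι α β : Type*} [DecidableEq ι] [AddCommMonoid β] [PartialOrder β]
    [IsOrderedAddMonoid β] (f : α → β) {I : Finset ι} {S : ι → α} {a b : ι} (ha : a ∈ I)
    (hb : b ∈ I) (hab : a ≠ b) {L H : α} (hcost : f H + f L ≤ f (S a) + f (S b)) :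
    ∑ i ∈ I, f (Function.update (Function.update S b L) a H i) ≤ ∑ i ∈ I, f (S i) := by
  have hb' : b ∈ I.erase a := mem_erase.2 ⟨hab.symm, hb⟩
  rw [← add_sum_erase I _ ha, ← add_sum_erase _ _ hb', ← add_sum_erase I _ ha,
    ← add_sum_erase _ _ hb', ← add_assoc, ← add_assoc, Function.update_self,
    Function.update_of_ne hab.symm, Function.update_self]
  refine add_le_add hcost (sum_le_sum fun j hj => ?_)
  rw [Function.update_of_ne (ne_of_mem_erase (mem_of_mem_erase hj)),
    Function.update_of_ne (ne_of_mem_erase hj)]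

theorem inter_subset_of_forall_lt {α : Type*} [Preorder α] [DecidableEq α] {W T L H : Finset α}
    (hT : T.card = H.card) (hup : ∀ w ∈ W \ T, ∀ t ∈ T, w < t) (hLH : L ∪ H ⊆ W)
    (hsort : ∀ l ∈ L, ∀ h ∈ H, l < h) : T ∩ (L ∪ H) ⊆ H := by
  intro u hu
  obtain ⟨huT, huLH⟩ := mem_inter.1 hu
  by_contra huH
  have huL : u ∈ L := (mem_union.1 huLH).resolve_right huH
  -- `u` lies below all of `H`, so `H` avoids `W \ T`: then `insert u H ⊆ T` is too large.
  have hHT : H ⊆ T := fun h hh => by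
    by_contra hhT
    exact lt_asymm (hsort u huL h hh) (hup h (mem_sdiff.2 ⟨hLH (mem_union_right _ hh), hhT⟩) u huT)
  have := card_le_card (insert_subset huT hHT)
  rw [card_insert_of_notMem huH, ← hT] at this
  omega

def ConsecutiveSplitMinimal (k : ℕ) : Prop :=
  ∀ (y : Fin (2 * k) → ℝ), Monotone y →
    ∀ S T : Finset (Fin (2 * k)), S.card = k → T.card = k → Disjoint S T →
      S ∪ T = Finset.univ →
      distWithin y (Finset.univ.filter (fun i => (i : ℕ) < k)) +
        distWithin y (Finset.univ.filter (fun i => k ≤ (i : ℕ))) ≤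
      distWithin y S + distWithin y T

theorem ConsecutiveSplitMinimal.exists_sorted_split_le {k M : ℕ}
    (hyp : ConsecutiveSplitMinimal k) {x : Fin M → ℝ} (hx : Monotone x) {A B : Finset (Fin M)}
    (hA : A.card = k) (hB : B.card = k) (hAB : Disjoint A B) :
    ∃ L H : Finset (Fin M), L.card = k ∧ H.card = k ∧ Disjoint L H ∧ L ∪ H = A ∪ B ∧
      (∀ l ∈ L, ∀ h ∈ H, l < h) ∧
      distWithin x L + distWithin x H ≤ distWithin x A + distWithin x B := by
  have hU : (A ∪ B).card = 2 * k := by rw [card_union_of_disjoint hAB, hA, hB, two_mul]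
  set e := (A ∪ B).orderEmbOfFin hU
  have he_univ : univ.image e = A ∪ B := image_orderEmbOfFin_univ _ hU
  obtain ⟨SA, -, hSA⟩ := subset_image_iff.1 (he_univ ▸ subset_union_left : A ⊆ univ.image e)
  obtain ⟨SB, -, hSB⟩ := subset_image_iff.1 (he_univ ▸ subset_union_right : B ⊆ univ.image e)
  have hcard : ∀ {T : Finset (Fin (2 * k))} {C : Finset (Fin M)}, T.image e = C → C.card = k →
      T.card = k := fun h hC => by rw [← card_image_of_injective _ e.injective, h, hC]
  set low : Finset (Fin (2 * k)) := univ.filter (fun i => (i : ℕ) < k)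
  set high : Finset (Fin (2 * k)) := univ.filter (fun i => k ≤ (i : ℕ))
  have hlow : low.card = k := by
    simp only [low, Fin.card_filter_val_lt]; omega
  have hcompl : univ.filter (fun i : Fin (2 * k) => ¬ (i : ℕ) < k) = high := by
    simp only [high, not_lt]
  have hhigh : high.card = k := by
    have := card_filter_add_card_filter_not (s := univ) (fun i : Fin (2 * k) => (i : ℕ) < k)
    rw [hcompl, hlow, card_univ, Fintype.card_fin] at this
    omega
  refine ⟨low.image e, high.image e, by rwa [card_image_of_injective _ e.injective],
    by rwa [card_image_of_injective _ e.injective], ?_, ?_, ?_, ?_⟩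
  · exact (disjoint_image e.injective).2 (disjoint_filter.2 fun i _ h => by omega)
  · rw [← image_union, ← hcompl, filter_union_filter_not_eq, he_univ]
  · simp only [low, high, mem_image, mem_filter, mem_univ, true_and]
    rintro _ ⟨i, hi, rfl⟩ _ ⟨j, hj, rfl⟩
    exact e.strictMono (Fin.lt_def.2 (by omega))
  · have hsplit := hyp (x ∘ e) (hx.comp e.monotone) SA SB (hcard hSA hA) (hcard hSB hB)
      ((disjoint_image e.injective).1 (hSA ▸ hSB ▸ hAB))
      (image_injective e.injective (by rw [image_union, hSA, hSB, he_univ]))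
    rwa [← distWithin_image x e.strictMono, ← distWithin_image x e.strictMono,
      ← distWithin_image x e.strictMono, ← distWithin_image x e.strictMono, hSA, hSB] at hsplit

theorem ConsecutiveSplitMinimal.exists_part_eq_of_forall_lt {k M : ℕ}
    (hyp : ConsecutiveSplitMinimal k) {x : Fin M → ℝ} (hx : Monotone x) {ι : Type*}
    [DecidableEq ι] {I : Finset ι} {W T : Finset (Fin M)} (hTW : T ⊆ W) (hT : T.card = k)
    (hup : ∀ w ∈ W \ T, ∀ t ∈ T, w < t) {a : ι} (ha : a ∈ I) {S : ι → Finset (Fin M)}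
    (hP : IsKPartition k I S W) :
    ∃ S' : ι → Finset (Fin M), IsKPartition k I S' W ∧ S' a = T ∧
      ∑ i ∈ I, distWithin x (S' i) ≤ ∑ i ∈ I, distWithin x (S i) := by
  induction hd : (T \ S a).card using Nat.strong_induction_on generalizing S with
  | _ d ih =>
  by_cases hsub : T ⊆ S a
  · exact ⟨S, hP, (eq_of_subset_of_card_le hsub (by rw [hT, hP.card_eq a ha])).symm, le_rfl⟩
  obtain ⟨t, htT, htA⟩ := not_subset.1 hsub
  obtain ⟨b, hb, htb⟩ : ∃ b ∈ I, t ∈ S b := mem_biUnion.1 (hP.biUnion_eq ▸ hTW htT)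
  have hab : a ≠ b := by rintro rfl; exact htA htb
  -- Sorting the parts `S a` and `S b` moves `t`, and every point of `T` they contain, into `H`.
  obtain ⟨L, H, hL, hH, hLH, hU, hsort, hcost⟩ := hyp.exists_sorted_split_le hx
    (hP.card_eq a ha) (hP.card_eq b hb) (hP.pairwiseDisjoint ha hb hab)
  have hUW : L ∪ H ⊆ W := hU ▸ hP.biUnion_eq ▸
    union_subset (subset_biUnion_of_mem S ha) (subset_biUnion_of_mem S hb)
  have hTH : T ∩ (S a ∪ S b) ⊆ H := hU ▸ inter_subset_of_forall_lt (hT.trans hH.symm) hup hUW hsort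
  have hsdiff : T \ H ⊂ T \ S a := by
    refine (ssubset_iff_of_subset fun u hu => ?_).2
      ⟨t, mem_sdiff.2 ⟨htT, htA⟩, fun ht => (mem_sdiff.1 ht).2 (hTH (by simp [htT, htb]))⟩
    obtain ⟨huT, huH⟩ := mem_sdiff.1 hu
    exact mem_sdiff.2 ⟨huT, fun huA => huH (hTH (by simp [huT, huA]))⟩
  obtain ⟨S', hP', hS'a, hcost'⟩ := ih _ (hd ▸ card_lt_card hsdiff)
    (hP.update_update ha hb hab hL hH hLH hU) (by rw [Function.update_self])
  exact ⟨S', hP', hS'a, hcost'.trans (sum_update_update_le _ ha hb hab (by linarith))⟩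

def firstIndices {M : ℕ} (N : ℕ) : Finset (Fin M) :=
  Finset.univ.filter (fun i => (i : ℕ) < N)

def consecutiveBlock {M : ℕ} (k m : ℕ) : Finset (Fin M) :=
  Finset.univ.filter (fun i => m * k ≤ (i : ℕ) ∧ (i : ℕ) < m * k + k)

section consecutiveBlock

variable {M : ℕ} (k m : ℕ)

theorem firstIndices_sdiff_consecutiveBlock :
    (firstIndices (m * k + k) \ consecutiveBlock k m : Finset (Fin M)) = firstIndices (m * k) := by
  ext i
  simp only [firstIndices, consecutiveBlock, mem_sdiff, mem_filter, mem_univ, true_and]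
  omega

theorem consecutiveBlock_subset_firstIndices :
    (consecutiveBlock k m : Finset (Fin M)) ⊆ firstIndices (m * k + k) :=
  fun i hi => by simp_all [firstIndices, consecutiveBlock]

theorem card_consecutiveBlock (h : m * k + k ≤ M) :
    (consecutiveBlock k m : Finset (Fin M)).card = k := by
  have := card_sdiff_add_card_eq_card (consecutiveBlock_subset_firstIndices k m (M := M))
  rw [firstIndices_sdiff_consecutiveBlock, firstIndices, firstIndices, Fin.card_filter_val_lt,
    Fin.card_filter_val_lt] at this
  omega

end consecutiveBlock

theorem ConsecutiveSplitMinimal.sum_consecutiveBlock_le {k M : ℕ}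
    (hyp : ConsecutiveSplitMinimal k) {x : Fin M → ℝ} (hx : Monotone x) {ι : Type*}
    [DecidableEq ι] (n : ℕ) (hn : n * k ≤ M) {I : Finset ι} (hI : I.card = n)
    {S : ι → Finset (Fin M)} (hP : IsKPartition k I S (firstIndices (n * k))) :
    ∑ m ∈ range n, distWithin x (consecutiveBlock k m) ≤ ∑ i ∈ I, distWithin x (S i) := by
  induction n generalizing I S with
  | zero => simp [card_eq_zero.1 hI]
  | succ n ih =>
    obtain ⟨a, ha⟩ := card_pos.1 (by omega : 0 < I.card)
    rw [Nat.succ_mul] at hn hP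
    have hup : ∀ w ∈ (firstIndices (n * k + k) \ consecutiveBlock k n : Finset (Fin M)),
        ∀ t ∈ consecutiveBlock k n, w < t := by
      rw [firstIndices_sdiff_consecutiveBlock]
      intro w hw t ht
      simp only [firstIndices, consecutiveBlock, mem_filter, mem_univ, true_and] at hw ht
      exact Fin.lt_def.2 (by omega)
    obtain ⟨S', hP', hS'a, hcost⟩ := hyp.exists_part_eq_of_forall_lt hx
      (consecutiveBlock_subset_firstIndices k n) (card_consecutiveBlock k n hn) hup ha hP
    have hrest := hP'.erase ha
    rw [hS'a, firstIndices_sdiff_consecutiveBlock] at hrest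
    calc ∑ m ∈ range (n + 1), distWithin x (consecutiveBlock k m)
        = ∑ m ∈ range n, distWithin x (consecutiveBlock k m) +
            distWithin x (consecutiveBlock k n) := sum_range_succ _ n
      _ ≤ ∑ i ∈ I.erase a, distWithin x (S' i) + distWithin x (S' a) := by
        rw [hS'a]
        exact add_le_add_left (ih (by omega) (by rw [card_erase_of_mem ha, hI]; rfl) hrest) _
      _ = ∑ i ∈ I, distWithin x (S' i) := sum_erase_add _ _ ha
      _ ≤ ∑ i ∈ I, distWithin x (S i) := hcost

theorem consecutive_blocks_min_of_pair_min_general (k : ℕ)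
    (hyp : ∀ (y : Fin (2 * k) → ℝ), Monotone y →
      ∀ S T : Finset (Fin (2 * k)), S.card = k → T.card = k → Disjoint S T →
        S ∪ T = Finset.univ →
        distWithin y (Finset.univ.filter (fun i => (i : ℕ) < k)) +
          distWithin y (Finset.univ.filter (fun i => k ≤ (i : ℕ))) ≤
        distWithin y S + distWithin y T)
    (n : ℕ) (x : Fin (k * n) → ℝ) (hx : Monotone x)
    (S : Fin n → Finset (Fin (k * n))) (hcard : ∀ m, (S m).card = k)
    (hdisj : Pairwise fun a b => Disjoint (S a) (S b))
    (hunion : (⋃ m, (S m : Set (Fin (k * n)))) = Set.univ) :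
    ∑ m : Fin n, distWithin x
        (Finset.univ.filter
          (fun i => (m : ℕ) * k ≤ (i : ℕ) ∧ (i : ℕ) < (m : ℕ) * k + k)) ≤
      ∑ m : Fin n, distWithin x (S m) := by
  have hP : IsKPartition k univ S (firstIndices (n * k)) := by
    refine ⟨fun m _ => hcard m, hdisj.set_pairwise _, ?_⟩
    ext w
    simp only [firstIndices, mem_biUnion, mem_univ, true_and, mem_filter]
    refine ⟨fun _ => w.isLt.trans_eq (Nat.mul_comm k n), fun _ => ?_⟩
    simpa using hunion.ge (Set.mem_univ w)
  exact (Fin.sum_univ_eq_sum_range (fun m => distWithin x (consecutiveBlock k m)) n).trans_le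
    (ConsecutiveSplitMinimal.sum_consecutiveBlock_le hyp hx n (Nat.mul_comm n k).le
      (card_fin n) hP)

/-- If for every sorted `2k`-tuple the consecutive split into the first `k` and
last `k` entries minimizes the total distance within over all partitions into
two `k`-element subsets, then for every `n ≥ 1` and every sorted `kn`-tuple the
partition into the `n` consecutive blocks of length `k` minimizes the total
distance within over all partitions into `n` pairwise disjoint `k`-element
subsets. -/
theorem consecutive_blocks_min_of_pair_min (k : ℕ) (hk : 1 ≤ k)
    (hyp : ∀ (y : Fin (2 * k) → ℝ), Monotone y →
      ∀ S T : Finset (Fin (2 * k)), S.card = k → T.card = k → Disjoint S T →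
        S ∪ T = Finset.univ →
        distWithin y (Finset.univ.filter (fun i => (i : ℕ) < k)) +
          distWithin y (Finset.univ.filter (fun i => k ≤ (i : ℕ))) ≤
        distWithin y S + distWithin y T)
    (n : ℕ) (hn : 1 ≤ n) (x : Fin (k * n) → ℝ) (hx : Monotone x)
    (S : Fin n → Finset (Fin (k * n))) (hcard : ∀ m, (S m).card = k)
    (hdisj : Pairwise fun a b => Disjoint (S a) (S b))
    (hunion : (⋃ m, (S m : Set (Fin (k * n)))) = Set.univ) :
    ∑ m : Fin n, distWithin x
        (Finset.univ.filter
          (fun i => (m : ℕ) * k ≤ (i : ℕ) ∧ (i : ℕ) < (m : ℕ) * k + k)) ≤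
      ∑ m : Fin n, distWithin x (S m) :=
  consecutive_blocks_min_of_pair_min_general k hyp n x hx S hcard hdisj hunion
end

section
/- Let x₁ ≤ x₂ ≤ ⋯ ≤ x₆ be real numbers. For every partition of the index set {1, …, 6} into two 3-element subsets S and T, the sum of the squared distances within the two triples (x₁, x₂, x₃) and (x₄, x₅, x₆) is minimal: S(x₁,x₂,x₃) + S(x₄,x₅,x₆) ≤ S(x_S) + S(x_T), where S(x_S) denotes the squared distance within the triple indexed by S. -/
/-!
Since `S(a,b,c) = 3(a² + b² + c²) - (a + b + c)²`, the total within-distance of a partition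
`{S, T}` is `3 ∑ xᵢ² - (σ_S² + σ_T²)` with `σ_S + σ_T = ∑ xᵢ` fixed. For sorted `x` every sum of
three entries is at least `x₁ + x₂ + x₃`, so `σ_S` and `σ_T` both lie in
`[x₁ + x₂ + x₃, x₄ + x₅ + x₆]`, and `σ_S² + σ_T²` is largest at the endpoints.
-/

/-- The squared distance within the tuple of values indexed by a finite index
set `S`: the sum of `(x j - x i)²` over all pairs `i < j` in `S`. -/
def sqDistWithin {m : ℕ} (x : Fin m → ℝ) (S : Finset (Fin m)) : ℝ :=
  ∑ i ∈ S, ∑ j ∈ S.filter (fun j => i < j), (x j - x i) ^ 2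

open Finset

theorem Finset.sum_le_sum_of_card_eq_of_forall_le {ι κ M : Type*} [AddCommMonoid M]
    [LinearOrder M] [IsOrderedAddMonoid M] {s : Finset ι} {t : Finset κ} {f : ι → M} {g : κ → M}
    (hcard : #s = #t) (hle : ∀ i ∈ s, ∀ j ∈ t, f i ≤ g j) :
    ∑ i ∈ s, f i ≤ ∑ j ∈ t, g j := by
  rcases t.eq_empty_or_nonempty with rfl | ht
  · simp_all
  calc ∑ i ∈ s, f i ≤ #s • t.inf' ht g :=
        sum_le_card_nsmul _ _ _ fun i hi => le_inf' ht _ fun j hj => hle i hi j hj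
    _ = #t • t.inf' ht g := by rw [hcard]
    _ ≤ ∑ j ∈ t, g j := card_nsmul_le_sum _ _ _ fun j hj => inf'_le g hj

theorem Monotone.sum_le_sum_of_isLowerSet {α M : Type*} [LinearOrder α] [AddCommMonoid M]
    [LinearOrder M] [IsOrderedAddMonoid M] {x : α → M} (hx : Monotone x) {I S : Finset α}
    (hI : IsLowerSet (I : Set α)) (hcard : #I = #S) :
    ∑ i ∈ I, x i ≤ ∑ i ∈ S, x i := by
  classical
  have hcross : ∀ i ∈ I \ S, ∀ j ∈ S \ I, x i ≤ x j := by
    intro i hi j hj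
    rw [mem_sdiff] at hi hj
    exact hx (le_of_not_ge fun hji => hj.2 (hI hji hi.1))
  rw [← sum_inter_add_sum_sdiff I S, ← sum_inter_add_sum_sdiff S I, inter_comm]
  exact add_le_add_right (sum_le_sum_of_card_eq_of_forall_le (card_sdiff_comm hcard) hcross) _

theorem two_mul_sqDistWithin {m : ℕ} (x : Fin m → ℝ) (S : Finset (Fin m)) :
    2 * sqDistWithin x S = ∑ i ∈ S, ∑ j ∈ S, (x j - x i) ^ 2 := by
  have hsplit : ∀ i j, (x j - x i) ^ 2 =
      (if i < j then (x j - x i) ^ 2 else 0) + (if j < i then (x i - x j) ^ 2 else 0) := by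
    intro i j
    rcases lt_trichotomy i j with h | rfl | h
    · simp only [h, h.not_gt, if_true, if_false, add_zero]
    · simp
    · simp only [h, h.not_gt, if_true, if_false, zero_add]
      ring
  rw [sum_congr rfl fun i _ => sum_congr rfl fun j _ => hsplit i j]
  simp only [sum_add_distrib]
  rw [sum_comm (f := fun i j => if j < i then (x i - x j) ^ 2 else 0)]
  simp only [sqDistWithin, sum_filter]
  ring

theorem sqDistWithin_eq_card_mul_sum_sq_sub_sq_sum {m : ℕ} (x : Fin m → ℝ)
    (S : Finset (Fin m)) :
    sqDistWithin x S = #S * ∑ i ∈ S, x i ^ 2 - (∑ i ∈ S, x i) ^ 2 := by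
  have h := two_mul_sqDistWithin x S
  simp only [sub_sq, sum_add_distrib, sum_sub_distrib, sum_const, nsmul_eq_mul] at h
  rw [sq (∑ i ∈ S, x i), sum_mul_sum]
  simp only [mul_assoc, ← mul_sum, ← sum_mul] at h ⊢
  linear_combination h / 2

theorem sq_add_sq_le_sq_add_sq_of_add_eq {R : Type*} [CommRing R] [LinearOrder R]
    [IsStrictOrderedRing R] {a b c d : R} (hsum : a + b = c + d) (ha : c ≤ a) (hb : c ≤ b) :
    a ^ 2 + b ^ 2 ≤ c ^ 2 + d ^ 2 := by
  have hd : d = a + b - c := by linear_combination -hsum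
  subst hd
  nlinarith [mul_nonneg (sub_nonneg.2 ha) (sub_nonneg.2 hb)]

/-- For a sorted 6-tuple, the partition into the triples `(x₁,x₂,x₃)` and
`(x₄,x₅,x₆)` minimizes the total squared distance within, over all partitions
of the six indices into two 3-element subsets. -/
theorem sorted_six_tuple_triple_matching_min_sq (x : Fin 6 → ℝ)
    (hx : Monotone x) (S T : Finset (Fin 6)) (hS : S.card = 3)
    (hT : T.card = 3) (hdisj : Disjoint S T) (hunion : S ∪ T = Finset.univ) :
    ((x 1 - x 0) ^ 2 + (x 2 - x 1) ^ 2 + (x 2 - x 0) ^ 2) +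
      ((x 4 - x 3) ^ 2 + (x 5 - x 4) ^ 2 + (x 5 - x 3) ^ 2) ≤
    sqDistWithin x S + sqDistWithin x T := by
  have hfirst_three_le : ∀ U : Finset (Fin 6), #U = 3 → x 0 + x 1 + x 2 ≤ ∑ i ∈ U, x i := by
    intro U hU
    have hI : IsLowerSet (({0, 1, 2} : Finset (Fin 6)) : Set (Fin 6)) := by
      intro a b hba ha
      simp only [coe_insert, coe_singleton, Set.mem_insert_iff, Set.mem_singleton_iff] at ha ⊢
      omega
    simpa [add_assoc] using hx.sum_le_sum_of_isLowerSet hI (hU ▸ rfl)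
  have hpartition : ∀ f : Fin 6 → ℝ, ∑ i ∈ S, f i + ∑ i ∈ T, f i = ∑ i, f i := fun f => by
    rw [← sum_union hdisj, hunion]
  have hlin := hpartition x
  have hquad := hpartition (x · ^ 2)
  simp only [Fin.sum_univ_six] at hlin hquad
  have hsq := sq_add_sq_le_sq_add_sq_of_add_eq (d := x 3 + x 4 + x 5)
    (by linarith) (hfirst_three_le S hS) (hfirst_three_le T hT)
  rw [sqDistWithin_eq_card_mul_sum_sq_sub_sq_sum, sqDistWithin_eq_card_mul_sum_sq_sub_sq_sum,
    hS, hT]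
  push_cast
  linear_combination hsq - 3 * hquad
end

section
/- Let n ≥ 1 and let x₁ ≤ x₂ ≤ ⋯ ≤ x_{2n} be a nondecreasing 2n-tuple of real numbers. For every partition of the index set {1, …, 2n} into n pairwise disjoint pairs {i₁,j₁}, …, {i_n,j_n}, the partition into consecutive pairs is minimal: ∑_{m=1}^{n} (x_{2m} − x_{2m−1}) ≤ ∑_{m=1}^{n} |x_{j_m} − x_{i_m}|. -/
/-- For a sorted `2n`-tuple, the partition into consecutive pairs minimizes
the total absolute-difference distance over all partitions of the `2n`
indices into `n` pairwise disjoint pairs. -/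
theorem consecutive_pairs_min_abs (n : ℕ) (hn : 1 ≤ n) (x : Fin (2 * n) → ℝ)
    (hx : Monotone x) (i j : Fin n → Fin (2 * n)) (hij : ∀ m, i m ≠ j m)
    (hdisj : ∀ m m', m ≠ m' →
      Disjoint ({i m, j m} : Finset (Fin (2 * n))) {i m', j m'})
    (hcover : ∀ p : Fin (2 * n), ∃ m, p = i m ∨ p = j m) :
    ∑ m : Fin n,
        (x ⟨2 * (m : ℕ) + 1, by have := m.isLt; omega⟩ -
          x ⟨2 * (m : ℕ), by have := m.isLt; omega⟩) ≤
      ∑ m : Fin n, |x (j m) - x (i m)| := by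
  classical
  have hN : 1 ≤ 2 * n := by omega
  set f : ℕ → ℝ := fun k => x ⟨min k (2 * n - 1), by omega⟩ with hf
  have hfmono : Monotone f := by
    intro a b hab
    apply hx
    simp only [Fin.le_def]
    omega
  have hfx : ∀ p : Fin (2 * n), f p.val = x p := by
    intro p
    have hp := p.isLt
    simp only [hf]
    congr 1
    exact Fin.ext (by simp; omega)
  set d : ℕ → ℝ := fun k => f (k + 1) - f k with hd
  have hd0 : ∀ k, 0 ≤ d k := fun k => sub_nonneg.2 (hfmono (Nat.le_succ k))
  have htel : ∀ a b : ℕ, a ≤ b → f b - f a = ∑ k ∈ Finset.Ico a b, d k := by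
    intro a b
    induction b with
    | zero => intro hab; interval_cases a; simp
    | succ b ih =>
      intro hab
      rcases Nat.lt_or_ge a (b + 1) with h | h
      · have hab' : a ≤ b := by omega
        rw [Finset.sum_Ico_succ_top hab', ← ih hab']
        simp only [hd]
        ring
      · have : a = b + 1 := by omega
        subst this
        simp
  -- notation for pair endpoints
  set lo : Fin n → ℕ := fun m => min (i m).val (j m).val with hlo
  set hi : Fin n → ℕ := fun m => max (i m).val (j m).val with hhi
  have hlohi : ∀ m, lo m < hi m := by
    intro m
    have := hij m
    have : (i m).val ≠ (j m).val := fun h => this (Fin.ext h)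
    simp only [hlo, hhi]
    omega
  have hhiN : ∀ m, hi m ≤ 2 * n - 1 := by
    intro m
    have h1 := (i m).isLt
    have h2 := (j m).isLt
    simp only [hhi]
    omega
  have habs : ∀ m, |x (j m) - x (i m)| = ∑ k ∈ Finset.Ico (lo m) (hi m), d k := by
    intro m
    rw [← htel (lo m) (hi m) (le_of_lt (hlohi m))]
    rcases le_total ((i m).val) ((j m).val) with h | h
    · have hx' : x (i m) ≤ x (j m) := hx h
      rw [abs_of_nonneg (by linarith)]
      simp only [hlo, hhi, min_eq_left h, max_eq_right h, hfx]
    · have hx' : x (j m) ≤ x (i m) := hx h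
      rw [abs_of_nonpos (by linarith), neg_sub]
      simp only [hlo, hhi, min_eq_right h, max_eq_left h, hfx]
  -- key parity claim: every even cut is crossed
  have hcross : ∀ k, k < 2 * n - 1 → Even k → ∃ m, lo m ≤ k ∧ k < hi m := by
    intro k hk hke
    by_contra hcon
    push_neg at hcon
    have hpair : ∀ m, ((i m).val ≤ k ∧ (j m).val ≤ k) ∨ (k < (i m).val ∧ k < (j m).val) := by
      intro m
      have h := hcon m
      simp only [hlo, hhi] at h
      omega
    set S : Finset (Fin (2 * n)) := Finset.univ.filter (fun p => p.val ≤ k) with hS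
    have hScard : S.card = k + 1 := by
      rw [show k + 1 = (Finset.range (k + 1)).card by simp]
      apply Finset.card_bij (fun p _ => p.val)
      · intro p hp
        simp only [hS, Finset.mem_filter] at hp
        simp only [Finset.mem_range]
        omega
      · intro p _ q _ h
        exact Fin.ext h
      · intro t ht
        simp only [Finset.mem_range] at ht
        refine ⟨⟨t, by omega⟩, ?_, rfl⟩
        simp [hS]
        omega
    have hunion : S = Finset.univ.biUnion (fun m => S ∩ {i m, j m}) := by
      ext p
      simp only [Finset.mem_biUnion, Finset.mem_inter, Finset.mem_univ, true_and]
      constructor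
      · intro hp
        obtain ⟨m, hm⟩ := hcover p
        refine ⟨m, hp, ?_⟩
        simp only [Finset.mem_insert, Finset.mem_singleton]
        tauto
      · rintro ⟨m, hp, _⟩
        exact hp
    have hdisj' : ∀ m ∈ (Finset.univ : Finset (Fin n)), ∀ m' ∈ Finset.univ, m ≠ m' →
        Disjoint (S ∩ {i m, j m}) (S ∩ {i m', j m'}) := by
      intro m _ m' _ hmm
      exact Finset.disjoint_of_subset_left Finset.inter_subset_right
        (Finset.disjoint_of_subset_right Finset.inter_subset_right (hdisj m m' hmm))
    have hcard : S.card = ∑ m : Fin n, (S ∩ {i m, j m}).card := by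
      conv_lhs => rw [hunion]
      exact Finset.card_biUnion hdisj'
    have heven : ∀ m : Fin n, Even ((S ∩ {i m, j m}).card) := by
      intro m
      rcases hpair m with ⟨h1, h2⟩ | ⟨h1, h2⟩
      · have hsub : S ∩ {i m, j m} = {i m, j m} := by
          apply Finset.inter_eq_right.mpr
          intro p hp
          simp only [Finset.mem_insert, Finset.mem_singleton] at hp
          simp only [hS, Finset.mem_filter, Finset.mem_univ, true_and]
          rcases hp with rfl | rfl <;> omega
        rw [hsub, Finset.card_insert_of_notMem (by simp [hij m]), Finset.card_singleton]
        exact even_two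
      · have hsub : S ∩ {i m, j m} = ∅ := by
          apply Finset.eq_empty_of_forall_notMem
          intro p hp
          simp only [Finset.mem_inter, Finset.mem_insert, Finset.mem_singleton, hS,
            Finset.mem_filter, Finset.mem_univ, true_and] at hp
          obtain ⟨hp1, hp2⟩ := hp
          rcases hp2 with rfl | rfl <;> omega
        simp [hsub]
    have hEvenS : Even (S.card) := by
      rw [hcard]
      exact Finset.even_sum _ (fun m _ => heven m)
    rw [hScard] at hEvenS
    rcases hke with ⟨r, hr⟩
    rcases hEvenS with ⟨s, hs⟩
    omega
  -- rewrite LHS as a sum over even gap indices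
  have hLHS : ∑ m : Fin n,
        (x ⟨2 * (m : ℕ) + 1, by have := m.isLt; omega⟩ -
          x ⟨2 * (m : ℕ), by have := m.isLt; omega⟩)
      = ∑ k ∈ Finset.range (2 * n - 1), if Even k then d k else 0 := by
    have h1 : ∀ m : Fin n,
        (x ⟨2 * (m : ℕ) + 1, by have := m.isLt; omega⟩ -
          x ⟨2 * (m : ℕ), by have := m.isLt; omega⟩) = d (2 * (m : ℕ)) := by
      intro m
      have hm := m.isLt
      simp only [hd]
      rw [← hfx ⟨2 * (m : ℕ) + 1, by omega⟩, ← hfx ⟨2 * (m : ℕ), by omega⟩]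
    rw [Finset.sum_congr rfl (fun m _ => h1 m)]
    rw [Fin.sum_univ_eq_sum_range (fun m => d (2 * m))]
    rw [← Finset.sum_filter]
    have himg : (Finset.range n).image (fun m => 2 * m)
        = (Finset.range (2 * n - 1)).filter (fun a => Even a) := by
      ext k
      simp only [Finset.mem_image, Finset.mem_range, Finset.mem_filter, Nat.even_iff]
      constructor
      · rintro ⟨m, hm, rfl⟩
        omega
      · rintro ⟨hk, hk2⟩
        exact ⟨k / 2, by omega, by omega⟩
    rw [← himg, Finset.sum_image (fun a _ b _ h => by omega)]
  rw [hLHS]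
  have hRHS : ∑ m : Fin n, |x (j m) - x (i m)|
      = ∑ k ∈ Finset.range (2 * n - 1), ∑ m : Fin n,
          (if lo m ≤ k ∧ k < hi m then d k else 0) := by
    rw [Finset.sum_comm]
    apply Finset.sum_congr rfl
    intro m _
    rw [habs m, ← Finset.sum_filter]
    congr 1
    ext k
    simp only [Finset.mem_Ico, Finset.mem_filter, Finset.mem_range]
    have := hhiN m
    omega
  rw [hRHS]
  apply Finset.sum_le_sum
  intro k hk
  simp only [Finset.mem_range] at hk
  by_cases hke : Even k
  · simp only [if_pos hke]
    obtain ⟨m₀, hm₀⟩ := hcross k hk hke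
    calc d k = if lo m₀ ≤ k ∧ k < hi m₀ then d k else 0 := by
          rw [if_pos hm₀]
      _ ≤ ∑ m : Fin n, (if lo m ≤ k ∧ k < hi m then d k else 0) := by
          apply Finset.single_le_sum (f := fun m => if lo m ≤ k ∧ k < hi m then d k else 0)
          · intro m _
            split
            · exact hd0 k
            · exact le_refl 0
          · exact Finset.mem_univ m₀
  · simp only [if_neg hke]
    apply Finset.sum_nonneg
    intro m _
    split
    · exact hd0 k
    · exact le_refl 0
end

section
/- Let n ≥ 1 and let x₁ ≤ x₂ ≤ ⋯ ≤ x_{3n} be a nondecreasing 3n-tuple of real numbers. For every partition of the index set {1, …, 3n} into n pairwise disjoint 3-element subsets S₁, …, S_n, the partition into consecutive triples minimizes the sum of squared distances: ∑_{m=1}^{n} S(x_{3m−2}, x_{3m−1}, x_{3m}) ≤ ∑_{m=1}^{n} S(x_{S_m}), where S(x_S) denotes the squared distance within the triple of values indexed by S. -/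
/-!
Clamp the indices to the `m`-th consecutive triple `{3m, 3m+1, 3m+2}` and let `xₘ` be `x`
composed with this clamp. For `i ≤ j` the increments `xₘ j - xₘ i` are nonnegative and add up to
at most `x j - x i`, so the squared distances of `x` dominate the sum over `m` of those of `xₘ`.
The tuple `xₘ` takes three values `A ≤ B ≤ C`: `A` on the `3m + 1` indices up to `3m`, `B` at
`3m + 1` and `C` above. If the triple through `3m + 1` meets both sides of it, its cost under `xₘ`
is already `(B - A)² + (C - B)² + (C - A)²`. Otherwise, as `3m + 1` is not a multiple of `3`,
another triple meets both `A`- and `C`-indices and costs `2 (C - A)²`, which makes up the deficit.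
-/

open Finset

theorem Finset.exists_eq_triple_of_mem {α : Type*} [LinearOrder α] {s : Finset α} (hs : #s = 3)
    {a : α} (ha : a ∈ s) : ∃ b c, a ≠ b ∧ a ≠ c ∧ b < c ∧ s = {a, b, c} := by
  obtain ⟨b, c, hbc, hbc'⟩ := card_eq_two.1 (by rw [card_erase_of_mem ha, hs] : #(s.erase a) = 2)
  have hb : b ∈ s.erase a := by simp [hbc']
  have hc : c ∈ s.erase a := by simp [hbc']
  have hs' : s = {a, b, c} := by rw [← hbc', insert_erase ha]
  rcases hbc.lt_or_gt with h | h
  · exact ⟨b, c, (ne_of_mem_erase hb).symm, (ne_of_mem_erase hc).symm, h, hs'⟩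
  · exact ⟨c, b, (ne_of_mem_erase hc).symm, (ne_of_mem_erase hb).symm, h, by rw [hs', pair_comm]⟩

theorem card_inter_modEq_card_of_subset_or_disjoint {α ι : Type*} [DecidableEq α] [Fintype ι]
    {k : ℕ} (S : ι → Finset α) (hcard : ∀ a, #(S a) = k)
    (hdisj : Pairwise fun a b => Disjoint (S a) (S b)) (L : Finset α)
    (hcover : ∀ p ∈ L, ∃ a, p ∈ S a) (a₀ : ι)
    (hsplit : ∀ a ≠ a₀, S a ⊆ L ∨ Disjoint (S a) L) :
    #(S a₀ ∩ L) ≡ #L [MOD k] := by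
  classical
  have hL : #L = ∑ a, #(S a ∩ L) := by
    rw [← card_biUnion fun a _ b _ hab => (hdisj hab).mono inter_subset_left inter_subset_left]
    congr 1
    ext p
    simp only [mem_biUnion, mem_univ, mem_inter, true_and]
    exact ⟨fun hp => (hcover p hp).imp fun _ h => ⟨h, hp⟩, fun ⟨_, h⟩ => h.2⟩
  have hrest : k ∣ ∑ a ∈ univ.erase a₀, #(S a ∩ L) := by
    refine dvd_sum fun a ha => ?_
    rcases hsplit a (ne_of_mem_erase ha) with h | h
    · rw [inter_eq_left.2 h, hcard]
    · rw [disjoint_iff_inter_eq_empty.1 h, card_empty]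
      exact dvd_zero k
  rw [hL, ← add_sum_erase _ _ (mem_univ a₀), Nat.modEq_iff_dvd' (Nat.le_add_right _ _),
    Nat.add_sub_cancel_left]
  exact hrest

section sqDistWithin

variable {N : ℕ} (y : Fin N → ℝ)

theorem sqDistWithin_singleton (a : Fin N) : sqDistWithin y {a} = 0 := by
  simp [sqDistWithin, filter_singleton]

theorem sqDistWithin_nonneg (s : Finset (Fin N)) :
    0 ≤ sqDistWithin y s :=
  sum_nonneg fun _ _ => sum_nonneg fun _ _ => sq_nonneg _

theorem sqDistWithin_insert {a : Fin N} {s : Finset (Fin N)} (ha : a ∉ s) :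
    sqDistWithin y (insert a s) = sqDistWithin y s + ∑ j ∈ s, (y j - y a) ^ 2 := by
  have hsplit : ∑ j ∈ s, (y j - y a) ^ 2 =
      ∑ j ∈ s.filter (a < ·), (y j - y a) ^ 2 + ∑ j ∈ s.filter (· < a), (y a - y j) ^ 2 := by
    rw [← sum_filter_add_sum_filter_not s (a < ·)]
    congr 1
    refine sum_congr ?_ fun j _ => by ring
    ext j
    simp only [mem_filter, not_lt]
    exact ⟨fun ⟨hj, hle⟩ => ⟨hj, hle.lt_of_ne fun h => ha (h ▸ hj)⟩,
      fun ⟨hj, hlt⟩ => ⟨hj, hlt.le⟩⟩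
  have hrow : ∀ i ∈ s, ∑ j ∈ (insert a s).filter (i < ·), (y j - y i) ^ 2 =
      ∑ j ∈ s.filter (i < ·), (y j - y i) ^ 2 + if i < a then (y a - y i) ^ 2 else 0 := by
    intro i hi
    rw [filter_insert]
    split_ifs
    · rw [sum_insert (fun h => ha (mem_filter.1 h).1), add_comm]
    · rw [add_zero]
  rw [hsplit, sqDistWithin, sum_insert ha, filter_insert, if_neg (lt_irrefl a), sum_congr rfl hrow,
    sum_add_distrib, ← sum_filter, sqDistWithin]
  ring

theorem sqDistWithin_triple {a b c : Fin N} (hab : a ≠ b) (hac : a ≠ c) (hbc : b ≠ c) :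
    sqDistWithin y {a, b, c} = (y b - y a) ^ 2 + (y c - y a) ^ 2 + (y c - y b) ^ 2 := by
  rw [sqDistWithin_insert y (by simp [hab, hac]), sqDistWithin_insert y (by simp [hbc]),
    sqDistWithin_singleton, sum_singleton, sum_pair hbc]
  ring

end sqDistWithin

theorem sqDistWithin_eq_of_two_levels {N : ℕ} {y : Fin N → ℝ} {T : Finset (Fin N)} (hT : #T = 3)
    {A C : ℝ} (hlevel : ∀ t ∈ T, (y t - A) * (y t - C) = 0) {u w : Fin N} (hu : u ∈ T)
    (hw : w ∈ T) (hyu : y u = A) (hyw : y w = C) :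
    sqDistWithin y T = 2 * (C - A) ^ 2 := by
  obtain ⟨p, q, hup, huq, hpq, rfl⟩ := exists_eq_triple_of_mem hT hu
  have hp := hlevel p (by simp)
  have hq := hlevel q (by simp)
  rw [sqDistWithin_triple y hup huq hpq.ne, hyu]
  simp only [mem_insert, mem_singleton] at hw
  rcases hw with rfl | rfl | rfl
  · obtain rfl : A = C := hyu.symm.trans hyw
    rw [sub_eq_zero.1 (mul_self_eq_zero.1 hp), sub_eq_zero.1 (mul_self_eq_zero.1 hq)]
    ring
  · rw [hyw]
    linear_combination 2 * hq
  · rw [hyw]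
    linear_combination 2 * hp

theorem sq_add_sq_add_sq_le_sum_sqDistWithin_of_three_levels {N : ℕ} {ι : Type*} [Fintype ι]
    (S : ι → Finset (Fin N)) (hcard : ∀ a, #(S a) = 3)
    (hdisj : Pairwise fun a b => Disjoint (S a) (S b)) (hcover : ∀ p, ∃ a, p ∈ S a)
    (y : Fin N → ℝ) (b : Fin N) (hb : (b : ℕ) % 3 = 1) {A B C : ℝ} (hAB : A ≤ B) (hBC : B ≤ C)
    (hlo : ∀ t < b, y t = A) (hmid : y b = B) (hhi : ∀ t, b < t → y t = C) :
    (B - A) ^ 2 + (C - B) ^ 2 + (C - A) ^ 2 ≤ ∑ a, sqDistWithin y (S a) := by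
  classical
  obtain ⟨a₀, hb₀⟩ := hcover b
  obtain ⟨v, w, hbv, hbw, hvw, hT₀⟩ := exists_eq_triple_of_mem (hcard a₀) hb₀
  have hcost₀ : sqDistWithin y (S a₀) = (y v - B) ^ 2 + (y w - B) ^ 2 + (y w - y v) ^ 2 := by
    rw [hT₀, sqDistWithin_triple y hbv hbw hvw.ne, hmid]
  have hsingle : sqDistWithin y (S a₀) ≤ ∑ a, sqDistWithin y (S a) :=
    single_le_sum (fun a _ => sqDistWithin_nonneg y (S a)) (mem_univ a₀)
  -- As `b ≡ 1 [MOD 3]`, unless `S a₀` has one index below `b`, another triple straddles `b`.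
  have hmixed (h : ¬ #(S a₀ ∩ Iio b) ≡ 1 [MOD 3]) :
      sqDistWithin y (S a₀) + 2 * (C - A) ^ 2 ≤ ∑ a, sqDistWithin y (S a) := by
    have hsplit : ¬ ∀ a ≠ a₀, S a ⊆ Iio b ∨ Disjoint (S a) (Iio b) := fun hsplit =>
      h ((card_inter_modEq_card_of_subset_or_disjoint S hcard hdisj _ (fun p _ => hcover p) a₀
        hsplit).trans (by rw [Fin.card_Iio]; exact hb))
    push Not at hsplit
    obtain ⟨a₁, hne, hnsub, hndisj⟩ := hsplit
    obtain ⟨w', hw', hw'b⟩ := not_subset.1 hnsub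
    obtain ⟨u, hu, hub⟩ := not_disjoint_iff.1 hndisj
    have hb₁ : b ∉ S a₁ := disjoint_right.1 (hdisj hne) hb₀
    have hlevel : ∀ t ∈ S a₁, (y t - A) * (y t - C) = 0 := by
      intro t ht
      rcases (ne_of_mem_of_not_mem ht hb₁).lt_or_gt with h | h
      · rw [hlo t h, sub_self, zero_mul]
      · rw [hhi t h, sub_self, mul_zero]
    have hcost₁ := sqDistWithin_eq_of_two_levels (hcard a₁) hlevel hu hw' (hlo u (mem_Iio.1 hub))
      (hhi w' ((not_lt.1 (mt mem_Iio.2 hw'b)).lt_of_ne (ne_of_mem_of_not_mem hw' hb₁).symm))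
    calc sqDistWithin y (S a₀) + 2 * (C - A) ^ 2
        = ∑ a ∈ {a₀, a₁}, sqDistWithin y (S a) := by rw [sum_pair hne.symm, hcost₁]
      _ ≤ ∑ a, sqDistWithin y (S a) :=
        sum_le_sum_of_subset_of_nonneg (subset_univ _) fun a _ _ => sqDistWithin_nonneg y (S a)
  rcases lt_or_gt_of_ne hbw.symm with hwb | hbw'
  · have hvb := hvw.trans hwb
    have := hmixed (by rw [hT₀]; simp [hvb, hwb, hvw.ne, Nat.ModEq])
    rw [hcost₀, hlo v hvb, hlo w hwb] at this
    nlinarith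
  rcases lt_or_gt_of_ne hbv.symm with hvb | hbv'
  · rw [hcost₀, hlo v hvb, hhi w hbw'] at hsingle
    linarith
  · have := hmixed (by rw [hT₀]; simp [lt_asymm hbv', lt_asymm hbw', Nat.ModEq])
    rw [hcost₀, hhi v hbv', hhi w hbw'] at this
    nlinarith

def clampToTriple (m t : ℕ) : ℕ := max (3 * m) (min (3 * m + 2) t)

theorem clampToTriple_of_le {m t : ℕ} (h : t ≤ 3 * m) : clampToTriple m t = 3 * m := by
  unfold clampToTriple
  omega

theorem clampToTriple_self_add_one (m : ℕ) : clampToTriple m (3 * m + 1) = 3 * m + 1 := by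
  unfold clampToTriple
  omega

theorem clampToTriple_of_ge {m t : ℕ} (h : 3 * m + 2 ≤ t) : clampToTriple m t = 3 * m + 2 := by
  unfold clampToTriple
  omega

theorem monotone_clampToTriple (m : ℕ) : Monotone (clampToTriple m) :=
  fun _ _ h => max_le_max le_rfl (min_le_min le_rfl h)

theorem sum_sub_clampToTriple_le {X : ℕ → ℝ} (hX : Monotone X) (s : Finset ℕ) {i j : ℕ}
    (hij : i ≤ j) :
    ∑ m ∈ s, (X (clampToTriple m j) - X (clampToTriple m i)) ≤ X j - X i := by
  -- Moving from `t` to `t + 1` changes only the clamp to the triple containing `t`.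
  have hstep (t m : ℕ) : X (clampToTriple m (t + 1)) - X (clampToTriple m t) ≤
      if t / 3 = m then X (t + 1) - X t else 0 := by
    unfold clampToTriple
    split_ifs with h
    · rw [show max (3 * m) (min (3 * m + 2) t) = t by omega]
      exact sub_le_sub_right (hX (by omega)) _
    · rw [show max (3 * m) (min (3 * m + 2) (t + 1)) = max (3 * m) (min (3 * m + 2) t) by omega,
        sub_self]
  have hmono : Monotone fun t => X t - ∑ m ∈ s, X (clampToTriple m t) := by
    refine monotone_nat_of_le_succ fun t => ?_
    have : ∑ m ∈ s, (X (clampToTriple m (t + 1)) - X (clampToTriple m t)) ≤ X (t + 1) - X t :=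
      calc _ ≤ ∑ m ∈ s, if t / 3 = m then X (t + 1) - X t else 0 := sum_le_sum fun m _ => hstep t m
        _ ≤ X (t + 1) - X t := by
          rw [sum_ite_eq]
          split_ifs
          exacts [le_rfl, sub_nonneg.2 (hX t.le_succ)]
    rw [sum_sub_distrib] at this
    linarith
  have := hmono hij
  rw [sum_sub_distrib]
  linarith

theorem sum_sq_sub_clampToTriple_le {X : ℕ → ℝ} (hX : Monotone X) (s : Finset ℕ) {i j : ℕ}
    (hij : i ≤ j) :
    ∑ m ∈ s, (X (clampToTriple m j) - X (clampToTriple m i)) ^ 2 ≤ (X j - X i) ^ 2 := by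
  have hnonneg : ∀ m ∈ s, 0 ≤ X (clampToTriple m j) - X (clampToTriple m i) :=
    fun m _ => sub_nonneg.2 (hX (monotone_clampToTriple m hij))
  calc _ ≤ (∑ m ∈ s, (X (clampToTriple m j) - X (clampToTriple m i))) ^ 2 :=
        sum_sq_le_sq_sum_of_nonneg hnonneg
    _ ≤ (X j - X i) ^ 2 :=
        pow_le_pow_left₀ (sum_nonneg hnonneg) (sum_sub_clampToTriple_le hX s hij) 2

theorem sum_sqDistWithin_clampToTriple_le {N : ℕ} {X : ℕ → ℝ} (hX : Monotone X) (s : Finset ℕ)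
    (T : Finset (Fin N)) :
    ∑ m ∈ s, sqDistWithin (fun t => X (clampToTriple m t)) T ≤ sqDistWithin (fun t => X t) T := by
  unfold sqDistWithin
  rw [sum_comm]
  refine sum_le_sum fun i _ => ?_
  rw [sum_comm]
  exact sum_le_sum fun j hj =>
    sum_sq_sub_clampToTriple_le hX s (Fin.le_def.1 (mem_filter.1 hj).2.le)

theorem Fin.exists_monotone_nat_extension {α : Type*} [Preorder α] {N : ℕ} (hN : 0 < N)
    {x : Fin N → α} (hx : Monotone x) : ∃ X : ℕ → α, Monotone X ∧ x = fun i : Fin N => X i :=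
  ⟨fun k => x ⟨min k (N - 1), by omega⟩, fun _ _ h => hx (Fin.mk_le_mk.2 (min_le_min_right _ h)),
    funext fun i => congrArg x (Fin.ext (by dsimp only; omega))⟩

/-- For a sorted `3n`-tuple, the partition into consecutive triples minimizes
the total squared distance within, over all partitions of the `3n` indices
into `n` pairwise disjoint 3-element subsets. -/
theorem consecutive_triples_min_sq (n : ℕ) (hn : 1 ≤ n) (x : Fin (3 * n) → ℝ)
    (hx : Monotone x) (S : Fin n → Finset (Fin (3 * n)))
    (hcard : ∀ m, (S m).card = 3)
    (hdisj : Pairwise fun a b => Disjoint (S a) (S b))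
    (hcover : ∀ p : Fin (3 * n), ∃ m, p ∈ S m) :
    ∑ m : Fin n,
        ((x ⟨3 * (m : ℕ) + 1, by have := m.isLt; omega⟩ -
            x ⟨3 * (m : ℕ), by have := m.isLt; omega⟩) ^ 2 +
          (x ⟨3 * (m : ℕ) + 2, by have := m.isLt; omega⟩ -
            x ⟨3 * (m : ℕ) + 1, by have := m.isLt; omega⟩) ^ 2 +
          (x ⟨3 * (m : ℕ) + 2, by have := m.isLt; omega⟩ -
            x ⟨3 * (m : ℕ), by have := m.isLt; omega⟩) ^ 2) ≤
      ∑ m : Fin n, sqDistWithin x (S m) := by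
  obtain ⟨X, hX, rfl⟩ := Fin.exists_monotone_nat_extension (by omega : 0 < 3 * n) hx
  calc _ ≤ ∑ m : Fin n, ∑ a, sqDistWithin (fun t => X (clampToTriple m t)) (S a) :=
        sum_le_sum fun m _ =>
          sq_add_sq_add_sq_le_sum_sqDistWithin_of_three_levels S hcard hdisj hcover _
            ⟨3 * m + 1, by omega⟩ (by simp) (hX (by omega : 3 * (m : ℕ) ≤ 3 * m + 1))
            (hX (by omega : 3 * (m : ℕ) + 1 ≤ 3 * m + 2))
            (fun t ht => congrArg X (clampToTriple_of_le (Nat.lt_succ_iff.1 ht)))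
            (congrArg X (clampToTriple_self_add_one m))
            (fun t ht => congrArg X (clampToTriple_of_ge ht))
    _ = ∑ a, ∑ m ∈ range n, sqDistWithin (fun t => X (clampToTriple m t)) (S a) := by
        rw [sum_comm]
        exact sum_congr rfl fun a _ =>
          Fin.sum_univ_eq_sum_range (fun m => sqDistWithin (fun t => X (clampToTriple m t)) (S a)) n
    _ ≤ ∑ a, sqDistWithin (fun t => X t) (S a) :=
        sum_le_sum fun a _ => sum_sqDistWithin_clampToTriple_le hX _ (S a)
end

section
/- Let n ≥ 1 and let (x₁ ≤ ⋯ ≤ x_n), (y₁ ≤ ⋯ ≤ y_n), (z₁ ≤ ⋯ ≤ z_n) be three nondecreasing n-tuples of real numbers. For all permutations σ and τ of {1, …, n}, the identity tripartite matching is minimal for absolute-difference weights: ∑_{i=1}^{n} ( |x_i − y_i| + |y_i − z_i| + |z_i − x_i| ) ≤ ∑_{i=1}^{n} ( |x_i − y_{σ(i)}| + |y_{σ(i)} − z_{τ(i)}| + |z_{τ(i)} − x_i| ). -/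
open Finset

/-- Four-point exchange inequality. -/
lemma four_point_abs {a b c d : ℝ} (hab : a ≤ b) (hcd : c ≤ d) :
    |a - c| + |b - d| ≤ |a - d| + |b - c| := by
  rcases abs_cases (a - c) with ⟨h1, h1'⟩ | ⟨h1, h1'⟩ <;>
  rcases abs_cases (b - d) with ⟨h2, h2'⟩ | ⟨h2, h2'⟩ <;>
  rcases abs_cases (a - d) with ⟨h3, h3'⟩ | ⟨h3, h3'⟩ <;>
  rcases abs_cases (b - c) with ⟨h4, h4'⟩ | ⟨h4, h4'⟩ <;>
  linarith

lemma sum_split_two {β : Type*} [AddCommMonoid β] {n : ℕ} {i j : Fin n} (hij : i ≠ j)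
    (G : Fin n → β) :
    ∑ k, G k = G i + G j + ∑ k ∈ (Finset.univ.erase i).erase j, G k := by
  rw [← Finset.add_sum_erase _ G (Finset.mem_univ i)]
  rw [← Finset.add_sum_erase _ G (Finset.mem_erase.2 ⟨Ne.symm hij, Finset.mem_univ j⟩)]
  exact (add_assoc _ _ _).symm

/-- Measure used for the exchange argument. -/
def permMeasure {n : ℕ} (σ : Equiv.Perm (Fin n)) : ℕ :=
  ∑ i : Fin n, (i : ℕ) * ((σ i : Fin n) : ℕ)

lemma permMeasure_lt {n : ℕ} (hn : 1 ≤ n) (σ : Equiv.Perm (Fin n)) :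
    permMeasure σ < n * n * n := by
  have h : permMeasure σ ≤ ∑ _i : Fin n, (n - 1) * (n - 1) := by
    apply Finset.sum_le_sum
    intro i _
    exact Nat.mul_le_mul (Nat.le_sub_one_of_lt i.isLt) (Nat.le_sub_one_of_lt (σ i).isLt)
  rw [Finset.sum_const, Finset.card_univ, Fintype.card_fin, smul_eq_mul] at h
  refine lt_of_le_of_lt h ?_
  obtain ⟨m, rfl⟩ := Nat.exists_eq_add_of_le hn
  simp only [Nat.add_sub_cancel_left _ m]
  nlinarith

/-- Two-sequence rearrangement: the identity matching minimizes `∑ |x i - y (σ i)|`. -/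
lemma two_seq_rearrangement {n : ℕ} (hn : 1 ≤ n) (x y : Fin n → ℝ)
    (hx : Monotone x) (hy : Monotone y) (σ : Equiv.Perm (Fin n)) :
    ∑ i : Fin n, |x i - y i| ≤ ∑ i : Fin n, |x i - y (σ i)| := by
  suffices H : ∀ k : ℕ, ∀ σ : Equiv.Perm (Fin n), n * n * n ≤ permMeasure σ + k →
      ∑ i : Fin n, |x i - y i| ≤ ∑ i : Fin n, |x i - y (σ i)| by
    exact H (n * n * n) σ (Nat.le_add_left _ _)
  intro k
  induction k with
  | zero =>
      intro σ h
      exact absurd (lt_of_lt_of_le (permMeasure_lt hn σ) h) (lt_irrefl _)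
  | succ k ih =>
      intro σ h
      by_cases hinv : ∃ i j : Fin n, i < j ∧ σ j < σ i
      · obtain ⟨i, j, hij, hσ⟩ := hinv
        set σ' : Equiv.Perm (Fin n) := σ * Equiv.swap i j with hσ'def
        have hne : i ≠ j := ne_of_lt hij
        have hσ'i : σ' i = σ j := by
          simp [hσ'def, Equiv.Perm.mul_apply, Equiv.swap_apply_left]
        have hσ'j : σ' j = σ i := by
          simp [hσ'def, Equiv.Perm.mul_apply, Equiv.swap_apply_right]
        have hσ'k : ∀ m : Fin n, m ≠ i → m ≠ j → σ' m = σ m := by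
          intro m hmi hmj
          simp [hσ'def, Equiv.Perm.mul_apply, Equiv.swap_apply_of_ne_of_ne hmi hmj]
        -- measure strictly increases
        have hM : permMeasure σ < permMeasure σ' := by
          unfold permMeasure
          rw [sum_split_two hne (fun m => (m : ℕ) * ((σ m : Fin n) : ℕ)),
              sum_split_two hne (fun m => (m : ℕ) * ((σ' m : Fin n) : ℕ))]
          have hrest : ∑ m ∈ (Finset.univ.erase i).erase j, (m : ℕ) * ((σ' m : Fin n) : ℕ)
              = ∑ m ∈ (Finset.univ.erase i).erase j, (m : ℕ) * ((σ m : Fin n) : ℕ) := by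
            apply Finset.sum_congr rfl
            intro m hm
            rw [Finset.mem_erase, Finset.mem_erase] at hm
            rw [hσ'k m hm.2.1 hm.1]
          rw [hrest, hσ'i, hσ'j]
          have h1 : (i : ℕ) < (j : ℕ) := hij
          have h2 : ((σ j : Fin n) : ℕ) < ((σ i : Fin n) : ℕ) := hσ
          have key : (i : ℕ) * ((σ i : Fin n) : ℕ) + (j : ℕ) * ((σ j : Fin n) : ℕ)
              < (i : ℕ) * ((σ j : Fin n) : ℕ) + (j : ℕ) * ((σ i : Fin n) : ℕ) := by
            nlinarith
          omega
        -- the sum does not increase after the swap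
        have hsum : ∑ m : Fin n, |x m - y (σ' m)| ≤ ∑ m : Fin n, |x m - y (σ m)| := by
          rw [sum_split_two hne (fun m => |x m - y (σ' m)|),
              sum_split_two hne (fun m => |x m - y (σ m)|)]
          have hrest : ∑ m ∈ (Finset.univ.erase i).erase j, |x m - y (σ' m)|
              = ∑ m ∈ (Finset.univ.erase i).erase j, |x m - y (σ m)| := by
            apply Finset.sum_congr rfl
            intro m hm
            rw [Finset.mem_erase, Finset.mem_erase] at hm
            rw [hσ'k m hm.2.1 hm.1]
          rw [hrest, hσ'i, hσ'j]
          have habs : |x i - y (σ j)| + |x j - y (σ i)| ≤ |x i - y (σ i)| + |x j - y (σ j)| :=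
            four_point_abs (hx hij.le) (hy hσ.le)
          linarith
        have hk : n * n * n ≤ permMeasure σ' + k := by omega
        exact le_trans (ih σ' hk) hsum
      · -- no inversion: σ is strictly monotone, hence the identity
        push_neg at hinv
        have hsm : StrictMono σ := by
          intro i j hij
          rcases lt_trichotomy (σ i) (σ j) with h | h | h
          · exact h
          · exact absurd (σ.injective h) (ne_of_lt hij)
          · exact absurd h (not_lt.2 (hinv i j hij))
        have : ∀ i, σ i = i := by
          let e : Fin n ≃o Fin n := ⟨σ, hsm.le_iff_le⟩
          have he : e = OrderIso.refl (Fin n) := Subsingleton.elim _ _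
          intro i
          have := congrArg (fun f => (f : Fin n ≃o Fin n) i) he
          simpa [e] using this
        apply le_of_eq
        apply Finset.sum_congr rfl
        intro i _
        rw [this i]

/-- For three sorted `n`-tuples, the identity tripartite matching minimizes
the total absolute-difference weight over all perfect tripartite matchings
(pairs of permutations). -/
theorem identity_tripartite_matching_min_abs (n : ℕ) (hn : 1 ≤ n)
    (x y z : Fin n → ℝ) (hx : Monotone x) (hy : Monotone y) (hz : Monotone z)
    (σ τ : Equiv.Perm (Fin n)) :
    ∑ i : Fin n, (|x i - y i| + |y i - z i| + |z i - x i|) ≤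
      ∑ i : Fin n, (|x i - y (σ i)| + |y (σ i) - z (τ i)| + |z (τ i) - x i|) := by
  have h1 : ∑ i : Fin n, |x i - y i| ≤ ∑ i : Fin n, |x i - y (σ i)| :=
    two_seq_rearrangement hn x y hx hy σ
  have h3 : ∑ i : Fin n, |z i - x i| ≤ ∑ i : Fin n, |z (τ i) - x i| := by
    have := two_seq_rearrangement hn x z hx hz τ
    calc ∑ i : Fin n, |z i - x i| = ∑ i : Fin n, |x i - z i| := by
          simp [abs_sub_comm]
      _ ≤ ∑ i : Fin n, |x i - z (τ i)| := this
      _ = ∑ i : Fin n, |z (τ i) - x i| := by simp [abs_sub_comm]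
  have h2 : ∑ i : Fin n, |y i - z i| ≤ ∑ i : Fin n, |y (σ i) - z (τ i)| := by
    set π : Equiv.Perm (Fin n) := τ * σ⁻¹ with hπ
    have hre : ∑ i : Fin n, |y (σ i) - z (τ i)| = ∑ j : Fin n, |y j - z (π j)| := by
      rw [← Equiv.sum_comp σ (fun j => |y j - z (π j)|)]
      apply Finset.sum_congr rfl
      intro i _
      simp [hπ, Equiv.Perm.mul_apply]
    rw [hre]
    exact two_seq_rearrangement hn y z hy hz π
  calc ∑ i : Fin n, (|x i - y i| + |y i - z i| + |z i - x i|)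
      = (∑ i : Fin n, |x i - y i|) + (∑ i : Fin n, |y i - z i|)
        + (∑ i : Fin n, |z i - x i|) := by rw [Finset.sum_add_distrib, Finset.sum_add_distrib]
    _ ≤ (∑ i : Fin n, |x i - y (σ i)|) + (∑ i : Fin n, |y (σ i) - z (τ i)|)
        + (∑ i : Fin n, |z (τ i) - x i|) := by linarith
    _ = _ := by rw [Finset.sum_add_distrib, Finset.sum_add_distrib]
end

section
/- Let n ≥ 1 and let w_AB, w_BC, w_CA : {1,…,n} × {1,…,n} → ℝ be nonnegative weight functions satisfying the triangle inequality w_CA(k, i) ≤ w_AB(i, j) + w_BC(j, k) for all i, j, k. Let σ* be a permutation minimizing ∑_{i} w_AB(i, σ(i)) and let τ* be a permutation minimizing ∑_{j} w_BC(j, τ(j)). Then the tripartite matching formed of the triples (i, σ*(i), τ*(σ*(i))) is within a factor of 2 of optimal: ∑_{i=1}^{n} [ w_AB(i, σ*(i)) + w_BC(σ*(i), τ*(σ*(i))) + w_CA(τ*(σ*(i)), i) ] ≤ 2 · ∑_{i=1}^{n} [ w_AB(i, σ(i)) + w_BC(σ(i), τ(i)) + w_CA(τ(i), i) ] for every pair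 of permutations σ, τ of {1, …, n}. -/
/-- If the nonnegative tripartite edge weights satisfy the triangle inequality
`w_CA(k,i) ≤ w_AB(i,j) + w_BC(j,k)`, then the tripartite matching obtained by
composing a minimal `A`-`B` matching `σ*` with a minimal `B`-`C` matching `τ*`
has weight within a factor of `2` of every perfect tripartite matching. -/
theorem tripartite_triangle_two_approx (n : ℕ) (hn : 1 ≤ n)
    (wAB wBC wCA : Fin n → Fin n → ℝ)
    (hAB : ∀ i j, 0 ≤ wAB i j) (hBC : ∀ i j, 0 ≤ wBC i j)
    (hCA : ∀ i j, 0 ≤ wCA i j)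
    (htri : ∀ i j k, wCA k i ≤ wAB i j + wBC j k)
    (σs τs : Equiv.Perm (Fin n))
    (hσs : ∀ π : Equiv.Perm (Fin n),
      ∑ i : Fin n, wAB i (σs i) ≤ ∑ i : Fin n, wAB i (π i))
    (hτs : ∀ π : Equiv.Perm (Fin n),
      ∑ j : Fin n, wBC j (τs j) ≤ ∑ j : Fin n, wBC j (π j))
    (σ τ : Equiv.Perm (Fin n)) :
    ∑ i : Fin n, (wAB i (σs i) + wBC (σs i) (τs (σs i)) + wCA (τs (σs i)) i) ≤
      2 * ∑ i : Fin n, (wAB i (σ i) + wBC (σ i) (τ i) + wCA (τ i) i) := by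
  set S : ℝ := ∑ i : Fin n, wAB i (σs i) with hS
  set T : ℝ := ∑ j : Fin n, wBC j (τs j) with hT
  have hcomp : ∑ i : Fin n, wBC (σs i) (τs (σs i)) = T := by
    rw [hT]; exact Equiv.sum_comp σs (fun j => wBC j (τs j))
  have hthird : ∑ i : Fin n, wCA (τs (σs i)) i ≤ S + T := by
    calc ∑ i : Fin n, wCA (τs (σs i)) i
        ≤ ∑ i : Fin n, (wAB i (σs i) + wBC (σs i) (τs (σs i))) :=
          Finset.sum_le_sum (fun i _ => htri i (σs i) (τs (σs i)))
      _ = S + T := by rw [Finset.sum_add_distrib, hcomp]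
  have hLHS : ∑ i : Fin n, (wAB i (σs i) + wBC (σs i) (τs (σs i)) + wCA (τs (σs i)) i)
      ≤ 2 * (S + T) := by
    rw [Finset.sum_add_distrib, Finset.sum_add_distrib, hcomp]
    linarith
  have hS' : S ≤ ∑ i : Fin n, wAB i (σ i) := hσs σ
  have hT' : T ≤ ∑ i : Fin n, wBC (σ i) (τ i) := by
    have := hτs (σ.symm.trans τ)
    calc T ≤ ∑ j : Fin n, wBC j ((σ.symm.trans τ) j) := this
      _ = ∑ i : Fin n, wBC (σ i) ((σ.symm.trans τ) (σ i)) :=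
          (Equiv.sum_comp σ (fun j => wBC j ((σ.symm.trans τ) j))).symm
      _ = ∑ i : Fin n, wBC (σ i) (τ i) := by simp
  have hRHS : S + T ≤ ∑ i : Fin n, (wAB i (σ i) + wBC (σ i) (τ i) + wCA (τ i) i) := by
    have h0 : 0 ≤ ∑ i : Fin n, wCA (τ i) i :=
      Finset.sum_nonneg (fun i _ => hCA _ _)
    rw [Finset.sum_add_distrib, Finset.sum_add_distrib]
    linarith
  linarith
end
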